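/- arXiv:1811.10987 — 3 statements merged into one kernel-verified Lean document; each statement's English description precedes it below -/
import Mathlib

section
/- Let A be a commutative unital Fréchet algebra over ℂ in which every nonzero element is invertible. Then A is isomorphic to ℂ, i.e., every element of A is a complex scalar multiple of the identity. -/
/-!
Once inversion is known to be continuous, the classical argument applies: if `z` is not a
scalar, the resolvent `c ↦ (c - z)⁻¹` is defined on all of `ℂ`, and a continuous linear
functional not vanishing at `(-z)⁻¹` (Hahn–Banach) turns it into an entire function that tends
to `0` at infinity, so it vanishes identically by Liouville's theorem.

Inversion is continuous in any complete metrizable field (Arens): given `x n → 1`, pick a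
subsequence `y` so fast that each tail product `∏_{i ≥ j} y i` converges, to `t j` say, with
`t j → 1` and `t 0 ≠ 0`; then `(y k)⁻¹ = (∏_{i < k} y i) * t (k + 1) / t 0 → 1`.

Local convexity is assumed for an arbitrary real module structure on `A`. Any two real module
structures agree on rational scalars, and closures of sets stable under rational convex
combinations are convex, so `A` is also locally convex over `ℝ ⊆ ℂ`.
-/

open Filter Topology Finset Set

noncomputable def seqOfPrefix {α : Type*} [Inhabited α] (next : (ℕ → α) → ℕ → α) (K : ℕ) : α :=
  next (fun i => if i < K then seqOfPrefix next i else default) K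
termination_by K

theorem exists_seq_forall_prefix {α : Type*} [Nonempty α] (P : (ℕ → α) → ℕ → α → Prop)
    (hP : ∀ f g K, (∀ i < K, f i = g i) → ∀ a, P f K a → P g K a) (h : ∀ f K, ∃ a, P f K a) :
    ∃ n : ℕ → α, ∀ K, P n K (n K) := by
  inhabit α
  choose next hnext using h
  refine ⟨seqOfPrefix next, fun K => ?_⟩
  rw [seqOfPrefix]
  exact hP _ _ K (fun i hi => if_pos hi) _ (hnext _ K)

theorem exists_seq_dist_mul_prod_range_lt {M : Type*} [CommMonoid M] [PseudoMetricSpace M]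
    [ContinuousMul M] {x : ℕ → M} (hx : Tendsto x atTop (𝓝 1)) {ε : ℕ → ℝ}
    (hε : ∀ k, 0 < ε k) :
    ∃ n : ℕ → ℕ, ∀ j k, dist ((∏ i ∈ range k, x (n (j + i))) * x (n (j + k)))
      (∏ i ∈ range k, x (n (j + i))) < ε (j + k) := by
  obtain ⟨n, hn⟩ := exists_seq_forall_prefix
    (fun prev K m => ∀ p ∈ antidiagonal K, dist ((∏ i ∈ range p.2, x (prev (p.1 + i))) * x m)
      (∏ i ∈ range p.2, x (prev (p.1 + i))) < ε K)
    (fun f g K hfg m hm p hp => by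
      have hprefix : ∏ i ∈ range p.2, x (f (p.1 + i)) = ∏ i ∈ range p.2, x (g (p.1 + i)) :=
        prod_congr rfl fun i hi => congrArg x <| hfg _ <| by
          rw [HasAntidiagonal.mem_antidiagonal] at hp
          rw [Finset.mem_range] at hi
          omega
      simpa only [hprefix] using hm p hp)
    (fun prev K => (((antidiagonal K).eventually_all.2 fun p _ =>
      (Metric.tendsto_nhds.1 (by simpa using hx.const_mul (∏ i ∈ range p.2, x (prev (p.1 + i)))))
        (ε K) (hε K)).exists))
  exact ⟨n, fun j k => hn (j + k) (j, k) (HasAntidiagonal.mem_antidiagonal.2 rfl)⟩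

section CompleteMetricField

variable {A : Type*} [Field A] [MetricSpace A] [CompleteSpace A] [ContinuousMul A]

theorem tendsto_inv_of_dist_mul_prod_range_le (y : ℕ → A) (ε : ℕ → ℝ) (hε : Summable ε)
    (hε_lt : ∑' k, ε k < dist (1 : A) 0)
    (hy : ∀ j k, dist ((∏ i ∈ range k, y (j + i)) * y (j + k)) (∏ i ∈ range k, y (j + i))
      ≤ ε (j + k)) :
    Tendsto (fun k => (y k)⁻¹) atTop (𝓝 1) := by
  set P : ℕ → ℕ → A := fun j k => ∏ i ∈ range k, y (j + i)
  have hstep (j k : ℕ) : dist (P j k) (P j (k + 1)) ≤ ε (j + k) := by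
    rw [dist_comm]
    simpa only [P, prod_range_succ] using hy j k
  have hsum (j : ℕ) : Summable fun k => ε (j + k) := (summable_nat_add_iff j).2 hε |>.congr
    fun k => by rw [add_comm]
  choose t ht using fun j => cauchySeq_tendsto_of_complete
    (cauchySeq_of_dist_le_of_summable _ (hstep j) (hsum j))
  have hdist (j : ℕ) : dist 1 (t j) ≤ ∑' k, ε (k + j) := by
    simpa [P, add_comm] using dist_le_tsum_of_dist_le_of_tendsto₀ _ (hstep j) (hsum j) (ht j)
  have ht_one : Tendsto t atTop (𝓝 1) := by
    refine tendsto_iff_dist_tendsto_zero.2 <|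
      squeeze_zero (fun _ => dist_nonneg) (fun j => ?_) (tendsto_sum_nat_add ε)
    rw [dist_comm]
    exact hdist j
  have ht₀ : t 0 ≠ 0 := by
    intro h
    have := hdist 0
    simp only [add_zero, h] at this
    linarith
  have hsplit (k : ℕ) : P 0 k * t k = t 0 := by
    refine tendsto_nhds_unique (((ht k).const_mul (P 0 k)).congr fun m => ?_)
      ((ht 0).comp (tendsto_add_atTop_nat k))
    simp only [P, Function.comp_apply, zero_add, add_comm m k, prod_range_add]
  have hinv (k : ℕ) : (y k)⁻¹ = P 0 k * t (k + 1) * (t 0)⁻¹ := by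
    have h := hsplit (k + 1)
    simp only [P, prod_range_succ, zero_add] at h ⊢
    rw [← h] at ht₀ ⊢
    refine inv_eq_of_mul_eq_one_left ?_
    rw [← mul_inv_cancel₀ ht₀]
    ring
  have hlim := ((ht 0).mul (ht_one.comp (tendsto_add_atTop_nat 1))).mul_const (t 0)⁻¹
  rw [mul_one, mul_inv_cancel₀ ht₀] at hlim
  exact hlim.congr fun k => (hinv k).symm

theorem exists_tendsto_inv_comp_of_tendsto_one {x : ℕ → A} (hx : Tendsto x atTop (𝓝 1)) :
    ∃ n : ℕ → ℕ, Tendsto (fun k => (x (n k))⁻¹) atTop (𝓝 1) := by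
  have hd : 0 < dist (1 : A) 0 := dist_pos.2 one_ne_zero
  obtain ⟨n, hn⟩ := exists_seq_dist_mul_prod_range_lt hx
    (ε := fun k => dist (1 : A) 0 / 2 / 2 / 2 ^ k) fun k => by positivity
  refine ⟨n, tendsto_inv_of_dist_mul_prod_range_le (x ∘ n) _ (summable_geometric_two' _) ?_
    fun j k => (hn j k).le⟩
  rw [tsum_geometric_two']
  linarith

theorem continuousAt_inv_one_of_completeSpace : ContinuousAt (Inv.inv : A → A) 1 := by
  refine tendsto_of_subseq_tendsto fun x hx => ?_
  simpa only [inv_one] using exists_tendsto_inv_comp_of_tendsto_one hx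

end CompleteMetricField

theorem continuousInv₀_of_completeSpace {A : Type*} [Field A] [UniformSpace A] [CompleteSpace A]
    [T0Space A] [ContinuousMul A] [(uniformity A).IsCountablyGenerated] : ContinuousInv₀ A := by
  let := UniformSpace.metricSpace A
  refine ⟨fun a ha => ?_⟩
  have h : (Inv.inv : A → A) = fun u => a⁻¹ * (u * a⁻¹)⁻¹ := by
    ext u
    rw [mul_inv, inv_inv, mul_left_comm, inv_mul_cancel₀ ha, mul_one]
  rw [h]
  refine continuousAt_const.mul (ContinuousAt.comp_of_eq ?_ (continuous_mul_const _).continuousAt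
    (mul_inv_cancel₀ ha))
  exact continuousAt_inv_one_of_completeSpace

section TopologicalField

variable {A : Type*} [Field A] [Algebra ℂ A] [TopologicalSpace A] [IsTopologicalRing A]
  [ContinuousSMul ℂ A] [ContinuousInv₀ A]

theorem differentiable_dual_inv_algebraMap_sub (ψ : StrongDual ℂ A) {z : A}
    (hz : ∀ c, algebraMap ℂ A c ≠ z) :
    Differentiable ℂ fun c => ψ (algebraMap ℂ A c - z)⁻¹ := by
  set R : ℂ → A := fun c => (algebraMap ℂ A c - z)⁻¹ with hR
  have hR_cont : Continuous R :=
    ((continuous_algebraMap ℂ A).sub continuous_const).inv₀ fun c => sub_ne_zero.2 (hz c)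
  have hslope (c₀ c : ℂ) (hc : c ≠ c₀) : slope (fun c => ψ (R c)) c₀ c = -ψ (R c * R c₀) := by
    have hres : R c - R c₀ = (c₀ - c) • (R c * R c₀) := by
      rw [hR, inv_sub_inv' (sub_ne_zero.2 (hz c)) (sub_ne_zero.2 (hz c₀)), sub_sub_sub_cancel_right,
        ← map_sub, Algebra.smul_def]
      ring
    rw [slope_def_field, ← map_sub, hres, map_smul, smul_eq_mul, ← neg_sub c, neg_mul,
      neg_div, mul_div_cancel_left₀ _ (sub_ne_zero.2 hc)]
  intro c₀
  refine (hasDerivAt_iff_tendsto_slope.2 ?_).differentiableAt (f' := -ψ (R c₀ * R c₀))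
  refine (((ψ.continuous.comp (hR_cont.mul continuous_const)).neg.tendsto c₀).mono_left
    nhdsWithin_le_nhds).congr' ?_
  filter_upwards [self_mem_nhdsWithin] with c hc
  exact (hslope c₀ c hc).symm

theorem tendsto_dual_inv_algebraMap_sub_cocompact (ψ : StrongDual ℂ A) (z : A) :
    Tendsto (fun c => ψ (algebraMap ℂ A c - z)⁻¹) (cocompact ℂ) (𝓝 0) := by
  have hcont : ContinuousAt (fun w : ℂ => w * ψ (1 - w • z)⁻¹) 0 := by
    refine continuousAt_id.mul (ψ.continuous.continuousAt.comp ?_)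
    exact (continuous_const.sub (continuous_id.smul continuous_const)).continuousAt.inv₀
      (by simp)
  have h := hcont.tendsto.comp tendsto_inv₀_cobounded
  rw [zero_mul, Metric.cobounded_eq_cocompact] at h
  refine h.congr' ?_
  filter_upwards [Metric.cobounded_eq_cocompact (α := ℂ) ▸ Bornology.eventually_ne_cobounded 0]
    with c hc
  have hfactor : algebraMap ℂ A c - z = c • (1 - c⁻¹ • z) := by
    rw [smul_sub, smul_smul, mul_inv_cancel₀ hc, one_smul, Algebra.algebraMap_eq_smul_one]
  rw [Function.comp_apply, hfactor, smul_inv₀, map_smul, smul_eq_mul]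

theorem algebraMap_surjective_of_separatingDual [SeparatingDual ℂ A] :
    Function.Surjective (algebraMap ℂ A) := by
  intro z
  by_contra! hz
  obtain ⟨ψ, hψ⟩ := SeparatingDual.exists_ne_zero (R := ℂ) (inv_ne_zero (sub_ne_zero.2 (hz 0)))
  exact hψ <| (differentiable_dual_inv_algebraMap_sub ψ hz).apply_eq_of_tendsto_cocompact 0
    (tendsto_dual_inv_algebraMap_sub_cocompact ψ z)

end TopologicalField

def RatConvex (𝕜 : Type*) {E : Type*} [DivisionRing 𝕜] [AddCommGroup E] [Module 𝕜 E]
    (S : Set E) : Prop :=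
  ∀ u ∈ S, ∀ v ∈ S, ∀ q : ℚ, 0 ≤ q → q ≤ 1 → (q : 𝕜) • u + ((1 - q : ℚ) : 𝕜) • v ∈ S

section RatConvex

variable {E : Type*} [AddCommGroup E]

theorem ratConvex_iff (𝕜 𝕜' : Type*) [DivisionRing 𝕜] [DivisionRing 𝕜'] [Module 𝕜 E]
    [Module 𝕜' E] {S : Set E} : RatConvex 𝕜 S ↔ RatConvex 𝕜' S := by
  simp only [RatConvex, ratCast_smul_eq 𝕜 𝕜']

theorem Convex.ratConvex [Module ℝ E] {S : Set E} (hS : Convex ℝ S) : RatConvex ℝ S :=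
  fun _ hu _ hv _ hq₀ hq₁ =>
    hS hu hv (Rat.cast_nonneg.2 hq₀) (Rat.cast_nonneg.2 (sub_nonneg.2 hq₁)) (by push_cast; ring)

variable [TopologicalSpace E]

theorem RatConvex.convex_closure [Module ℝ E] [ContinuousAdd E] [ContinuousSMul ℝ E]
    {S : Set E} (hS : RatConvex ℝ S) : Convex ℝ (closure S) := by
  have hsegment : ∀ u ∈ S, ∀ v ∈ S, ∀ a ∈ Icc (0 : ℝ) 1, a • u + (1 - a) • v ∈ closure S := by
    intro u hu v hv
    have hT : IsClosed {a : ℝ | a • u + (1 - a) • v ∈ closure S} :=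
      isClosed_closure.preimage (by fun_prop)
    have hrat :
        Ioo (0 : ℝ) 1 ∩ range ((↑) : ℚ → ℝ) ⊆ {a : ℝ | a • u + (1 - a) • v ∈ closure S} := by
      rintro _ ⟨⟨h₀, h₁⟩, q, rfl⟩
      refine subset_closure ?_
      simpa using hS u hu v hv q (by exact_mod_cast h₀.le) (by exact_mod_cast h₁.le)
    calc Icc (0 : ℝ) 1 = closure (Ioo 0 1) := (closure_Ioo zero_ne_one).symm
      _ ⊆ closure (Ioo 0 1 ∩ range ((↑) : ℚ → ℝ)) :=
        closure_minimal (Rat.denseRange_cast.open_subset_closure_inter isOpen_Ioo) isClosed_closure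
      _ ⊆ _ := hT.closure_subset_iff.2 hrat
  intro x hx y hy a b ha hb hab
  obtain rfl : b = 1 - a := by linarith
  have hxy : (x, y) ∈ closure (S ×ˢ S) := by
    rw [closure_prod_eq]
    exact ⟨hx, hy⟩
  simpa only [closure_closure] using map_mem_closure (by fun_prop) hxy
    fun p hp => hsegment p.1 hp.1 p.2 hp.2 a ⟨ha, by linarith⟩

variable [IsTopologicalAddGroup E]

theorem LocallyConvexSpace.exists_ratConvex_subset (𝕜 : Type*) [DivisionRing 𝕜] [Module 𝕜 E]
    [Module ℝ E] [LocallyConvexSpace ℝ E] {U : Set E} (hU : U ∈ 𝓝 0) :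
    ∃ S ∈ 𝓝 (0 : E), RatConvex 𝕜 S ∧ S ⊆ U := by
  obtain ⟨S, hS, hSc, hSU⟩ := (locallyConvexSpace_iff_exists_convex_subset_zero ℝ E).1 ‹_› U hU
  exact ⟨S, hS, (ratConvex_iff ℝ 𝕜).1 hSc.ratConvex, hSU⟩

theorem LocallyConvexSpace.of_exists_ratConvex_subset [Module ℝ E] [ContinuousSMul ℝ E]
    (h : ∀ U ∈ 𝓝 (0 : E), ∃ S ∈ 𝓝 (0 : E), RatConvex ℝ S ∧ S ⊆ U) :
    LocallyConvexSpace ℝ E := by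
  refine (locallyConvexSpace_iff_exists_convex_subset_zero ℝ E).2 fun U hU => ?_
  obtain ⟨W, hW, hWc, hWU⟩ := exists_mem_nhds_isClosed_subset hU
  obtain ⟨S, hS, hSc, hSW⟩ := h W hW
  exact ⟨closure S, mem_of_superset hS subset_closure, hSc.convex_closure,
    (closure_minimal hSW hWc).trans hWU⟩

theorem SeparatingDual.of_exists_ratConvex_subset [Module ℂ E] [ContinuousSMul ℂ E] [T1Space E]
    (h : ∀ U ∈ 𝓝 (0 : E), ∃ S ∈ 𝓝 (0 : E), RatConvex ℂ S ∧ S ⊆ U) : SeparatingDual ℂ E := by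
  have : ContinuousSMul ℝ E := IsScalarTower.continuousSMul ℂ
  have : LocallyConvexSpace ℝ E := .of_exists_ratConvex_subset fun U hU =>
    (h U hU).imp fun _ ⟨hS, hSc, hSU⟩ => ⟨hS, (ratConvex_iff ℂ ℝ).1 hSc, hSU⟩
  refine ⟨fun x hx => ?_⟩
  obtain ⟨f, hf⟩ := RCLike.geometric_hahn_banach_point_point (𝕜 := ℂ) hx
  exact ⟨f, fun h => by simp [h] at hf⟩

end RatConvex

theorem gelfand_mazur_frechet_general
    (A : Type*) [CommRing A] [Nontrivial A] [Algebra ℂ A]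
    [UniformSpace A] [IsUniformAddGroup A] [CompleteSpace A] [IsTopologicalRing A]
    [ContinuousSMul ℂ A] [Module ℝ A]
    [LocallyConvexSpace ℝ A] [TopologicalSpace.MetrizableSpace A]
    (hinv : ∀ a : A, a ≠ 0 → IsUnit a) :
    Function.Surjective (algebraMap ℂ A) := by
  have : SeparatingDual ℂ A := .of_exists_ratConvex_subset fun _ =>
    LocallyConvexSpace.exists_ratConvex_subset ℂ
  have : (uniformity A).IsCountablyGenerated := IsUniformAddGroup.uniformity_countably_generated
  let : Field A := IsField.toField
    ⟨exists_pair_ne A, mul_comm, fun ha => (hinv _ ha).exists_right_inv⟩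
  have : ContinuousInv₀ A := continuousInv₀_of_completeSpace
  exact algebraMap_surjective_of_separatingDual

/-- The Gelfand–Mazur theorem for Fréchet algebras: a commutative unital Fréchet
algebra over `ℂ` (complete metrizable locally convex topological algebra) in which
every nonzero element is invertible is isomorphic to `ℂ`, i.e. every element is a
complex scalar multiple of the identity. -/
theorem gelfand_mazur_frechet
    (A : Type*) [CommRing A] [Nontrivial A] [Algebra ℂ A]
    [UniformSpace A] [IsUniformAddGroup A] [CompleteSpace A] [IsTopologicalRing A]
    [ContinuousSMul ℂ A] [Module ℝ A] [IsScalarTower ℝ ℂ A]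
    [LocallyConvexSpace ℝ A] [TopologicalSpace.MetrizableSpace A]
    (hinv : ∀ a : A, a ≠ 0 → IsUnit a) :
    Function.Surjective (algebraMap ℂ A) :=
  gelfand_mazur_frechet_general A hinv
end

section
/- There exists a maximal ideal of the algebra C(ℝ) of continuous complex-valued functions on ℝ, with the topology of uniform convergence on compact sets, that is not closed. -/
/-!
Compactly supported functions form a proper ideal of `C(ℝ, ℂ)`, since `ℝ` is not compact, and
it is dense: by Urysohn, every `f` agrees on a given compact set with `f * u` for a compactly
supported bump `u`. A maximal ideal containing a dense proper ideal is dense, so it cannot be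
closed without being everything.
-/

open Filter Topology Set

namespace ContinuousMap

variable {X Y : Type*} [TopologicalSpace X] [TopologicalSpace Y]

theorem mem_closure_of_forall_isCompact_exists_eqOn {S : Set C(X, Y)} {f : C(X, Y)}
    (h : ∀ K, IsCompact K → ∃ g ∈ S, EqOn g f K) : f ∈ closure S := by
  choose g hgS hgf using fun K : TopologicalSpace.Compacts X => h K K.isCompact
  refine mem_closure_of_tendsto (b := atTop) (tendsto_nhds_compactOpen.mpr fun K hK U _ hfKU => ?_)
    (Eventually.of_forall hgS)
  filter_upwards [eventually_ge_atTop ⟨K, hK⟩] with L hKL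
  exact fun x hx => hgf L (hKL hx) ▸ hfKU hx

variable (X) (R : Type*) [TopologicalSpace R] [Semiring R] [IsTopologicalSemiring R]

def compactSupportIdeal : Ideal C(X, R) where
  carrier := {f | HasCompactSupport f}
  add_mem' hf hg := hf.add hg
  zero_mem' := HasCompactSupport.zero
  smul_mem' _ _ hf := hf.mul_left

variable {X R}

@[simp]
theorem mem_compactSupportIdeal {f : C(X, R)} :
    f ∈ compactSupportIdeal X R ↔ HasCompactSupport f :=
  Iff.rfl

theorem compactSupportIdeal_ne_top [Nontrivial R] [NoncompactSpace X] :
    compactSupportIdeal X R ≠ ⊤ := by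
  rw [Ne, Ideal.eq_top_iff_one, mem_compactSupportIdeal]
  intro h
  have : tsupport (1 : C(X, R)) = univ := by
    rw [tsupport, coe_one, Function.support_one, closure_univ]
  exact noncompact_univ X (this ▸ h)

theorem dense_compactSupportIdeal [RegularSpace X] [LocallyCompactSpace X] [Algebra ℝ R]
    [ContinuousSMul ℝ R] : Dense (compactSupportIdeal X R : Set C(X, R)) := by
  refine fun f => mem_closure_of_forall_isCompact_exists_eqOn fun K hK => ?_
  obtain ⟨u, hu1, -, hu, -⟩ := exists_continuous_one_zero_of_isCompact hK isClosed_empty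
    (disjoint_empty K)
  let v : C(X, R) := (ContinuousMap.mk _ (continuous_algebraMap ℝ R)).comp u
  have hv : HasCompactSupport v := hu.comp_left (map_zero (algebraMap ℝ R))
  refine ⟨f * v, hv.mul_left, fun x hx => ?_⟩
  simp [v, hu1 hx]

end ContinuousMap

theorem Ideal.exists_isMaximal_not_isClosed_of_dense {R : Type*} [Semiring R] [TopologicalSpace R]
    {I : Ideal R} (hI : I ≠ ⊤) (hdense : Dense (I : Set R)) :
    ∃ M : Ideal R, M.IsMaximal ∧ ¬ IsClosed (M : Set R) := by
  obtain ⟨M, hM, hIM⟩ := I.exists_le_maximal hI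
  refine ⟨M, hM, fun hclosed => hM.ne_top ?_⟩
  rw [← SetLike.coe_set_eq, Submodule.top_coe, ← hclosed.closure_eq]
  exact (hdense.mono hIM).closure_eq

/-- There is a maximal ideal of `C(ℝ, ℂ)` (continuous complex-valued functions on `ℝ`
with the compact-open topology, i.e. uniform convergence on compact sets) that is
not closed. -/
theorem exists_maximal_ideal_not_closed_C_real :
    ∃ I : Ideal C(ℝ, ℂ), I.IsMaximal ∧ ¬ IsClosed (I : Set C(ℝ, ℂ)) :=
  Ideal.exists_isMaximal_not_isClosed_of_dense ContinuousMap.compactSupportIdeal_ne_top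
    ContinuousMap.dense_compactSupportIdeal
end

section
/- Let A be a Banach algebra over ℂ with a bounded left approximate identity, and let E be a left Banach A-module. Then for every x in the closure of A·E and every ε > 0, there exist a ∈ A and y ∈ E such that x = a·y and ‖x − y‖ < ε. -/
/-!
Adjoin a unit to `A` (with the `L¹` norm) and extend `σ` to a unital representation `ρ` of the
unitization `B`. For small `d > 0` the elements `(1 - d) + d e_i` are invertible in `B`, with
inverses bounded uniformly in `i`. Choose indices `i₁, i₂, …` one after the other and put
`u_n = ((1 - d) + d e_{i_n}) ⋯ ((1 - d) + d e_{i_1})`. The scalar part of `u_n` is `(1 - d)^n`,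
so `u_{n+1} - u_n = d (e_{i_n} u_n - u_n)` is of order `(1 - d)^n` once `e_{i_n}` nearly fixes
the `A`-part of `u_n`; hence `u_n` converges to some `a ∈ A`. Moreover
`ρ(b⁻¹) x - x = ρ(b⁻¹) (d (x - e_i x))` for `b = (1 - d) + d e_i`, so `y_n = ρ(u_n⁻¹) x` moves
by as little as we like at each step and converges to some `y` close to `x`. Passing to the
limit in `ρ(u_n) y_n = x` gives `x = a y`.
-/

open scoped Topology
open Filter WithLp Unitization

theorem tendsto_apply_of_mem_closure
    {𝕜 A E ι : Type*} [NontriviallyNormedField 𝕜] [NonUnitalSeminormedRing A] [NormedSpace 𝕜 A]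
    [SeminormedAddCommGroup E] [NormedSpace 𝕜 E]
    (σ : A →L[𝕜] E →L[𝕜] E) (hσ : ∀ a b : A, σ (a * b) = (σ a).comp (σ b))
    {l : Filter ι} {e : ι → A} {M : ℝ} (hM : ∀ i, ‖e i‖ ≤ M)
    (hai : ∀ a : A, Tendsto (fun i => e i * a) l (𝓝 a)) {x : E}
    (hx : x ∈ closure {y : E | ∃ (a : A) (z : E), σ a z = y}) :
    Tendsto (fun i => σ (e i) x) l (𝓝 x) := by
  have hequi : Equicontinuous fun i => ⇑(σ (e i)) :=
    ((NormedSpace.equicontinuous_TFAE fun i => σ (e i)).out 5 1).mp <|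
      show ∃ C, ∀ i, ‖σ (e i)‖ ≤ C from
        ⟨‖σ‖ * M, fun i => (σ.le_opNorm _).trans (by gcongr; exact hM i)⟩
  refine closure_minimal ?_ (hequi.isClosed_setOfPred_tendsto continuous_id) hx
  rintro _ ⟨a, z, rfl⟩
  have : Tendsto (fun i => σ (e i * a) z) l (𝓝 (σ a z)) :=
    ((σ.flip z).continuous.tendsto a).comp (hai a)
  simpa [hσ] using this

theorem norm_inv_oneSub_le {R : Type*} [NormedRing R] [NormOneClass R] [HasSummableGeomSeries R]
    (t : R) (ht : ‖t‖ < 1) : ‖(↑(Units.oneSub t ht)⁻¹ : R)‖ ≤ (1 - ‖t‖)⁻¹ := by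
  have := tsum_geometric_le_of_norm_lt_one t ht
  rwa [norm_one, sub_self, zero_add] at this

theorem map_inv_oneSub_mul_apply_sub {R 𝕜 E F : Type*} [NormedRing R] [HasSummableGeomSeries R]
    [NontriviallyNormedField 𝕜] [SeminormedAddCommGroup E] [NormedSpace 𝕜 E]
    [FunLike F R (E →L[𝕜] E)] [RingHomClass F R (E →L[𝕜] E)] (ρ : F)
    (u : Rˣ) (t : R) (ht : ‖t‖ < 1) (x : E) :
    ρ ↑(Units.oneSub t ht * u)⁻¹ x - ρ ↑u⁻¹ x =
      ρ ↑u⁻¹ (ρ ↑(Units.oneSub t ht)⁻¹ (ρ t x)) := by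
  set b := Units.oneSub t ht
  have hb : ρ ↑b⁻¹ (ρ ↑b x) = x := by
    rw [← mul_apply_eq_comp, ← map_mul, Units.inv_mul, map_one, one_apply_eq_self]
  have ht : ρ t x = x - ρ ↑b x := by simp [b, Units.val_oneSub, map_sub]
  rw [ht, map_sub, hb, map_sub, mul_inv_rev, Units.val_mul, map_mul, mul_apply_eq_comp]

theorem norm_map_inv_oneSub_mul_apply_sub_le {R 𝕜 E F : Type*} [NormedRing R] [NormOneClass R]
    [HasSummableGeomSeries R] [NontriviallyNormedField 𝕜] [SeminormedAddCommGroup E]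
    [NormedSpace 𝕜 E] [FunLike F R (E →L[𝕜] E)] [RingHomClass F R (E →L[𝕜] E)] (ρ : F)
    {C : ℝ} (hC : 0 ≤ C) (hρ : ∀ z, ‖ρ z‖ ≤ C * ‖z‖) (u : Rˣ) (t : R) (ht : ‖t‖ < 1)
    (x : E) :
    ‖ρ ↑(Units.oneSub t ht * u)⁻¹ x - ρ ↑u⁻¹ x‖ ≤
      ‖ρ ↑u⁻¹‖ * (C * (1 - ‖t‖)⁻¹) * ‖ρ t x‖ := by
  rw [map_inv_oneSub_mul_apply_sub, mul_assoc]
  refine (ContinuousLinearMap.le_opNorm _ _).trans ?_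
  gcongr
  calc ‖ρ ↑(Units.oneSub t ht)⁻¹ (ρ t x)‖ ≤ ‖ρ ↑(Units.oneSub t ht)⁻¹‖ * ‖ρ t x‖ :=
        ContinuousLinearMap.le_opNorm _ _
    _ ≤ C * (1 - ‖t‖)⁻¹ * ‖ρ t x‖ := by
        gcongr
        exact (hρ _).trans (by gcongr; exact norm_inv_oneSub_le t ht)

theorem apply_eq_of_tendsto_units {R 𝕜 E F ι : Type*} [Monoid R] [TopologicalSpace R]
    [NontriviallyNormedField 𝕜] [NormedAddCommGroup E] [NormedSpace 𝕜 E]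
    [FunLike F R (E →L[𝕜] E)] [MonoidHomClass F R (E →L[𝕜] E)] {ρ : F} (hρ : Continuous ρ)
    {l : Filter ι} [l.NeBot] {u : ι → Rˣ} {w : R}
    (hu : Tendsto (fun n => (u n : R)) l (𝓝 w)) {x y : E}
    (hy : Tendsto (fun n => ρ ↑(u n)⁻¹ x) l (𝓝 y)) : ρ w y = x := by
  have h : Tendsto (fun n => ρ (u n) (ρ ↑(u n)⁻¹ x)) l (𝓝 (ρ w y)) :=
    (isBoundedBilinearMap_apply.continuous.tendsto (ρ w, y)).comp
      (((hρ.tendsto w).comp hu).prodMk_nhds hy)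
  refine tendsto_nhds_unique h ?_
  simp only [← mul_apply_eq_comp, ← map_mul, Units.mul_inv, map_one, one_apply_eq_self]
  exact tendsto_const_nhds

namespace WithLp

variable {𝕜 A : Type*} [NormedField 𝕜] [NonUnitalNormedRing A] [NormedSpace 𝕜 A]
  [SMulCommClass 𝕜 A A] [IsScalarTower 𝕜 A A]

@[simp]
theorem unitization_one : ofLp (1 : WithLp 1 (Unitization 𝕜 A)) = 1 :=
  rfl

instance : NormOneClass (WithLp 1 (Unitization 𝕜 A)) :=
  ⟨by simp [unitization_norm_def]⟩

theorem continuous_unitization_fst :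
    Continuous fun z : WithLp 1 (Unitization 𝕜 A) => (ofLp z).fst :=
  AddMonoidHomClass.continuous_of_bound ((fstHom 𝕜 A).comp (unitizationAlgEquiv 𝕜).toAlgHom) 1
    fun z => by simp [unitization_norm_def]

theorem unitization_norm_sub_inr_mul_le (z : WithLp 1 (Unitization 𝕜 A)) (a : A) :
    ‖z - toLp 1 (a : Unitization 𝕜 A) * z‖ ≤
      ‖(ofLp z).fst‖ * (1 + ‖a‖) + ‖(ofLp z).snd - a * (ofLp z).snd‖ := by
  set p := ofLp z
  have hfst : (p - a * p).fst = p.fst := by simp [sub_eq_add_neg, fst_mul]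
  have hsnd : (p - a * p).snd = (p.snd - a * p.snd) - p.fst • a := by
    simp only [sub_eq_add_neg, snd_add, snd_neg, snd_mul, fst_inr, snd_inr, zero_smul, zero_add]
    abel
  have := norm_sub_le (p.snd - a * p.snd) (p.fst • a)
  rw [norm_smul] at this
  rw [unitization_norm_def,
    show ofLp (z - toLp 1 (a : Unitization 𝕜 A) * z) = p - a * p from rfl, hfst, hsnd]
  linarith

end WithLp

section UnitizationRep

variable {𝕜 A E : Type*} [NontriviallyNormedField 𝕜] [NonUnitalNormedRing A]
  [NormedSpace 𝕜 A] [SMulCommClass 𝕜 A A] [IsScalarTower 𝕜 A A] [SeminormedAddCommGroup E]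
  [NormedSpace 𝕜 E]

noncomputable def unitizationRep (σ : A →L[𝕜] E →L[𝕜] E)
    (hσ : ∀ a b : A, σ (a * b) = (σ a).comp (σ b)) :
    WithLp 1 (Unitization 𝕜 A) →ₐ[𝕜] E →L[𝕜] E :=
  (Unitization.lift { σ.toLinearMap with map_zero' := map_zero σ, map_mul' := hσ }).comp
    (unitizationAlgEquiv 𝕜).toAlgHom

variable (σ : A →L[𝕜] E →L[𝕜] E) (hσ : ∀ a b : A, σ (a * b) = (σ a).comp (σ b))

theorem unitizationRep_apply (z : WithLp 1 (Unitization 𝕜 A)) :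
    unitizationRep σ hσ z = (ofLp z).fst • (1 : E →L[𝕜] E) + σ (ofLp z).snd := by
  simp [unitizationRep, Algebra.algebraMap_eq_smul_one]

theorem unitizationRep_inr (a : A) :
    unitizationRep σ hσ (toLp 1 (a : Unitization 𝕜 A)) = σ a := by
  simp [unitizationRep_apply]

theorem norm_unitizationRep_le (z : WithLp 1 (Unitization 𝕜 A)) :
    ‖unitizationRep σ hσ z‖ ≤ max 1 ‖σ‖ * ‖z‖ := by
  rw [unitizationRep_apply, unitization_norm_def, mul_add]
  refine (norm_add_le _ _).trans (add_le_add ?_ ?_)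
  · refine (norm_smul_le _ _).trans ?_
    rw [mul_comm]
    gcongr
    exact ContinuousLinearMap.norm_id_le.trans (le_max_left _ _)
  · exact (σ.le_opNorm _).trans (by gcongr; exact le_max_right _ _)

theorem continuous_unitizationRep : Continuous (unitizationRep σ hσ) :=
  AddMonoidHomClass.continuous_of_bound _ _ (norm_unitizationRep_le σ hσ)

end UnitizationRep

section Cohen

variable {𝕜 A E : Type*} [RCLike 𝕜] [NonUnitalNormedRing A] [NormedSpace 𝕜 A]
  [SMulCommClass 𝕜 A A] [IsScalarTower 𝕜 A A] [NormedAddCommGroup E] [NormedSpace 𝕜 E]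

local notation "𝔄" => WithLp 1 (Unitization 𝕜 A)

variable (𝕜) in
/-- `1 - cohenShift 𝕜 d a = (1 - d) + d a` are the factors of Cohen's products. -/
noncomputable def cohenShift (d : ℝ) (a : A) : 𝔄 :=
  (d : 𝕜) • (1 - toLp 1 (a : Unitization 𝕜 A))

theorem norm_cohenShift_le {d : ℝ} (hd : 0 ≤ d) (a : A) :
    ‖cohenShift 𝕜 d a‖ ≤ d * (1 + ‖a‖) := by
  rw [cohenShift, norm_smul, RCLike.norm_ofReal, abs_of_nonneg hd]
  gcongr
  exact (norm_sub_le _ _).trans_eq (by rw [norm_one, unitization_norm_inr])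

theorem fst_cohenShift (d : ℝ) (a : A) : (ofLp (cohenShift 𝕜 d a)).fst = d := by
  simp [cohenShift, sub_eq_add_neg]

theorem cohenShift_mul (d : ℝ) (a : A) (z : 𝔄) :
    cohenShift 𝕜 d a * z = (d : 𝕜) • (z - toLp 1 (a : Unitization 𝕜 A) * z) := by
  rw [cohenShift, smul_mul_assoc, sub_mul, one_mul]

theorem unitizationRep_cohenShift (σ : A →L[𝕜] E →L[𝕜] E)
    (hσ : ∀ a b : A, σ (a * b) = (σ a).comp (σ b)) (d : ℝ) (a : A) (x : E) :
    unitizationRep σ hσ (cohenShift 𝕜 d a) x = (d : 𝕜) • (x - σ a x) := by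
  simp [cohenShift, unitizationRep_inr]

variable [CompleteSpace A]

theorem fst_oneSub_cohenShift_mul {d : ℝ} {a : A} (h : ‖cohenShift 𝕜 d a‖ < 1) (u : 𝔄ˣ) :
    (ofLp (↑(Units.oneSub _ h * u) : 𝔄)).fst = ((1 - d : ℝ) : 𝕜) * (ofLp (u : 𝔄)).fst := by
  simp [Units.val_oneSub, fst_cohenShift, sub_eq_add_neg]

theorem norm_oneSub_cohenShift_mul_sub_le {d : ℝ} (hd : 0 ≤ d) {a : A}
    (h : ‖cohenShift 𝕜 d a‖ < 1) (u : 𝔄ˣ) :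
    ‖(↑(Units.oneSub _ h * u) : 𝔄) - u‖ ≤
      d * (‖(ofLp (u : 𝔄)).fst‖ * (1 + ‖a‖) +
        ‖(ofLp (u : 𝔄)).snd - a * (ofLp (u : 𝔄)).snd‖) := by
  rw [Units.val_mul, Units.val_oneSub, sub_mul, one_mul, sub_sub_cancel_left, norm_neg,
    cohenShift_mul, norm_smul, RCLike.norm_ofReal, abs_of_nonneg hd]
  gcongr
  exact unitization_norm_sub_inr_mul_le _ _

section Representation

variable (σ : A →L[𝕜] E →L[𝕜] E) (hσ : ∀ a b : A, σ (a * b) = (σ a).comp (σ b))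

local notation "ρ" => unitizationRep σ hσ

theorem tendsto_unitizationRep_inv_oneSub_cohenShift_mul_apply {ι : Type*} {l : Filter ι}
    {e : ι → A} {d r : ℝ} (hd : 0 ≤ d) (hr : r < 1)
    (ht : ∀ i, ‖cohenShift 𝕜 d (e i)‖ ≤ r) {x : E}
    (hx : Tendsto (fun i => σ (e i) x) l (𝓝 x)) (u : 𝔄ˣ) :
    Tendsto (fun i => ρ ↑(Units.oneSub _ ((ht i).trans_lt hr) * u)⁻¹ x) l
      (𝓝 (ρ ↑u⁻¹ x)) := by
  have h0 : Tendsto (fun i => ‖ρ ↑u⁻¹‖ * (max 1 ‖σ‖ * (1 - r)⁻¹) * d * ‖x - σ (e i) x‖) l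
      (𝓝 0) := by
    simpa using (((tendsto_const_nhds (x := x)).sub hx).norm).const_mul _
  rw [tendsto_iff_norm_sub_tendsto_zero]
  refine squeeze_zero (fun _ => norm_nonneg _) (fun i => ?_) h0
  have hr' : (1 - ‖cohenShift 𝕜 d (e i)‖)⁻¹ ≤ (1 - r)⁻¹ :=
    inv_anti₀ (by linarith) (by linarith [ht i])
  refine (norm_map_inv_oneSub_mul_apply_sub_le _ (by positivity) (norm_unitizationRep_le σ hσ)
    _ _ _ _).trans ?_
  rw [unitizationRep_cohenShift, norm_smul, RCLike.norm_ofReal, abs_of_nonneg hd, ← mul_assoc]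
  gcongr

theorem exists_cohen_step {ι : Type*} {l : Filter ι} [l.NeBot] {e : ι → A} {M d : ℝ}
    (hM : ∀ i, ‖e i‖ ≤ M) (hai : ∀ a, Tendsto (fun i => e i * a) l (𝓝 a)) {x : E}
    (hx : Tendsto (fun i => σ (e i) x) l (𝓝 x)) (hd : 0 ≤ d) (hdM : d * (1 + M) < 1)
    (u : 𝔄ˣ) {η : ℝ} (hη : 0 < η) :
    ∃ v : 𝔄ˣ, (ofLp (v : 𝔄)).fst = ((1 - d : ℝ) : 𝕜) * (ofLp (u : 𝔄)).fst ∧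
      ‖(v : 𝔄) - u‖ ≤ d * (‖(ofLp (u : 𝔄)).fst‖ * (1 + M) + η) ∧
      ‖ρ ↑v⁻¹ x - ρ ↑u⁻¹ x‖ < η := by
  have ht : ∀ i, ‖cohenShift 𝕜 d (e i)‖ ≤ d * (1 + M) := fun i =>
    (norm_cohenShift_le hd _).trans (by gcongr; exact hM i)
  set s := (ofLp (u : 𝔄)).snd
  have hA : ∀ᶠ i in l, ‖s - e i * s‖ < η := by
    simpa only [dist_eq_norm'] using Metric.tendsto_nhds.mp (hai s) η hη
  have hE := Metric.tendsto_nhds.mp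
    (tendsto_unitizationRep_inv_oneSub_cohenShift_mul_apply σ hσ hd hdM ht hx u) η hη
  obtain ⟨i, hAi, hEi⟩ := (hA.and hE).exists
  refine ⟨_, fst_oneSub_cohenShift_mul _ u,
    (norm_oneSub_cohenShift_mul_sub_le hd _ u).trans ?_, by rwa [← dist_eq_norm]⟩
  gcongr
  exact hM i

theorem exists_cohen_seq {ι : Type*} {l : Filter ι} [l.NeBot] {e : ι → A} {M d ε : ℝ}
    (hM : ∀ i, ‖e i‖ ≤ M) (hai : ∀ a, Tendsto (fun i => e i * a) l (𝓝 a)) {x : E}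
    (hx : Tendsto (fun i => σ (e i) x) l (𝓝 x)) (hd : 0 < d) (hdM : d * (1 + M) < 1)
    (hε : 0 < ε) :
    ∃ u : ℕ → 𝔄ˣ, u 0 = 1 ∧ (∀ n, (ofLp (u n : 𝔄)).fst = ((1 - d : ℝ) : 𝕜) ^ n) ∧
      (∀ n, ‖(u (n + 1) : 𝔄) - u n‖ ≤ d * (1 + M + ε) * (1 - d) ^ n) ∧
      ∀ n, ‖ρ ↑(u (n + 1))⁻¹ x - ρ ↑(u n)⁻¹ x‖ ≤ ε * (1 - d) ^ n := by
  have hM0 : 0 ≤ M := (norm_nonneg _).trans (hM (nonempty_of_neBot l).some)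
  have hd1 : 0 < 1 - d := by nlinarith
  choose! v hv using fun (n : ℕ) (u : 𝔄ˣ) =>
    exists_cohen_step σ hσ hM hai hx hd.le hdM u (η := ε * (1 - d) ^ n) (by positivity)
  let u : ℕ → 𝔄ˣ := fun n => Nat.rec (motive := fun _ => 𝔄ˣ) 1 v n
  have hfst : ∀ n, (ofLp (u n : 𝔄)).fst = ((1 - d : ℝ) : 𝕜) ^ n := by
    intro n
    induction n with
    | zero => simp [u]
    | succ n ih => rw [pow_succ, mul_comm, ← ih]; exact (hv n (u n)).1
  refine ⟨u, rfl, hfst, fun n => ?_, fun n => (hv n (u n)).2.2.le⟩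
  have hnorm : ‖(ofLp (u n : 𝔄)).fst‖ = (1 - d) ^ n := by
    rw [hfst, norm_pow, RCLike.norm_ofReal, abs_of_pos hd1]
  calc _ ≤ d * (‖(ofLp (u n : 𝔄)).fst‖ * (1 + M) + ε * (1 - d) ^ n) := (hv n (u n)).2.1
    _ = _ := by rw [hnorm]; ring

end Representation

theorem exists_eq_apply_and_norm_sub_lt_of_tendsto [CompleteSpace E] (σ : A →L[𝕜] E →L[𝕜] E)
    (hσ : ∀ a b : A, σ (a * b) = (σ a).comp (σ b)) {ι : Type*} {l : Filter ι} [l.NeBot]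
    {e : ι → A} {M : ℝ} (hM : ∀ i, ‖e i‖ ≤ M)
    (hai : ∀ a, Tendsto (fun i => e i * a) l (𝓝 a)) {x : E}
    (hx : Tendsto (fun i => σ (e i) x) l (𝓝 x)) {ε : ℝ} (hε : 0 < ε) :
    ∃ (a : A) (y : E), x = σ a y ∧ ‖x - y‖ < ε := by
  have hM0 : 0 ≤ M := (norm_nonneg _).trans (hM (nonempty_of_neBot l).some)
  set d := (2 * (1 + M))⁻¹
  have hd : 0 < d := by positivity
  have hdM : d * (1 + M) = 1 / 2 := by simp only [d]; field_simp
  have hd2 : d ≤ 1 / 2 := by nlinarith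
  have hd1 : 1 - d < 1 := by linarith
  obtain ⟨u, hu0, hfst, hu, hy⟩ :=
    exists_cohen_seq σ hσ hM hai hx hd (by linarith) (half_pos (mul_pos hε hd))
  obtain ⟨w, hw⟩ := cauchySeq_tendsto_of_complete <|
    cauchySeq_of_le_geometric (f := fun n => (u n : 𝔄)) (1 - d) _ hd1
      fun n => (dist_comm _ _).trans_le <| (dist_eq_norm _ _).trans_le (hu n)
  set ρ := unitizationRep σ hσ
  have hy' : ∀ n, dist (ρ ↑(u n)⁻¹ x) (ρ ↑(u (n + 1))⁻¹ x) ≤ ε * d / 2 * (1 - d) ^ n :=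
    fun n => (dist_comm _ _).trans_le <| (dist_eq_norm _ _).trans_le (hy n)
  obtain ⟨y, hy⟩ := cauchySeq_tendsto_of_complete (cauchySeq_of_le_geometric _ _ hd1 hy')
  have hxy := dist_le_of_le_geometric_of_tendsto₀ _ _ hd1 hy' hy
  have hw0 : (ofLp w).fst = 0 := by
    refine tendsto_nhds_unique ((continuous_unitization_fst.tendsto w).comp hw) ?_
    simpa [Function.comp_def, hfst] using tendsto_pow_atTop_nhds_zero_of_norm_lt_one
      (show ‖((1 - d : ℝ) : 𝕜)‖ < 1 by
        rw [RCLike.norm_ofReal, abs_of_pos (by linarith)]; linarith)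
  refine ⟨(ofLp w).snd, y, ?_, ?_⟩
  · rw [← apply_eq_of_tendsto_units (continuous_unitizationRep σ hσ) hw hy, unitizationRep_apply,
      hw0, zero_smul, zero_add]
  · rw [← dist_eq_norm]
    simp only [hu0, inv_one, Units.val_one, map_one, one_apply_eq_self] at hxy
    calc dist x y ≤ ε * d / 2 / (1 - (1 - d)) := hxy
      _ = ε / 2 := by rw [sub_sub_cancel]; field_simp
      _ < ε := half_lt_self hε

end Cohen

/-- Cohen's factorization theorem: if `A` is a Banach algebra over `ℂ` with a bounded
left approximate identity `(e_i)` and `E` is a left Banach `A`-module (the module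
action being a continuous bilinear associative action `σ`), then every `x` in the
closure of `A • E` factors as `x = a • y` with `y` arbitrarily close to `x`. -/
theorem cohen_factorization
    (A : Type*) [NonUnitalNormedRing A] [NormedSpace ℂ A] [SMulCommClass ℂ A A]
    [IsScalarTower ℂ A A] [CompleteSpace A]
    (E : Type*) [NormedAddCommGroup E] [NormedSpace ℂ E] [CompleteSpace E]
    (σ : A →L[ℂ] E →L[ℂ] E) (hσ : ∀ a b : A, σ (a * b) = (σ a).comp (σ b))
    (ι : Type*) (l : Filter ι) [l.NeBot] (e : ι → A)
    (hbdd : ∃ M : ℝ, ∀ i, ‖e i‖ ≤ M)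
    (hai : ∀ a : A, Tendsto (fun i => e i * a) l (𝓝 a)) :
    ∀ x ∈ closure {y : E | ∃ (a : A) (z : E), σ a z = y}, ∀ ε > (0 : ℝ),
      ∃ (a : A) (y : E), x = σ a y ∧ ‖x - y‖ < ε := by
  intro x hx ε hε
  obtain ⟨M, hM⟩ := hbdd
  exact exists_eq_apply_and_norm_sub_lt_of_tendsto σ hσ hM hai
    (tendsto_apply_of_mem_closure σ hσ hM hai hx) hε
end
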